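/- arXiv:1811.07019 — 3 statements merged into one kernel-verified Lean document; each statement's English description precedes it below -/
import Mathlib

section
/- For all natural numbers l ≥ 9 and all r with 2 ≤ r ≤ l/2, one has 2^(l-r+1) · (l choose (r-1)) ≥ 16 · (l choose 4). -/
/-!
For `r ≤ 4` the left-hand side `2 ^ (l - k) * C(l, k)`, `k = r - 1`, increases with `k` as long as
`3 k + 2 ≤ l`, so it is smallest at `k = 1`, where `16 C(l, 4) ≤ 2 ^ (l - 1) l` reduces to
`C(l - 1, 3) ≤ 2 ^ (l - 3)`; the latter follows by induction from `C(n, 2) ≤ C(n, 3)`.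
For `r ≥ 5` both factors dominate separately: `2 ^ (l - r + 1) ≥ 2 ^ 4` and, since
`4 ≤ r - 1 ≤ l / 2`, `C(l, r - 1) ≥ C(l, 4)`.
-/

namespace Nat

theorem choose_le_choose_of_le_of_le_half {n a b : ℕ} (hab : a ≤ b) (hb : b ≤ n / 2) :
    n.choose a ≤ n.choose b := by
  induction b, hab using Nat.le_induction with
  | base => rfl
  | succ k _ ih => exact (ih (by omega)).trans (choose_le_succ_of_lt_half_left (by omega))

theorem choose_three_le_two_pow {n : ℕ} (hn : 8 ≤ n) : n.choose 3 ≤ 2 ^ (n - 2) := by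
  induction n, hn using Nat.le_induction with
  | base => decide
  | succ n hn ih =>
    have h23 : n.choose 2 ≤ n.choose 3 := choose_le_succ_of_lt_half_left (by omega)
    have hpow : 2 ^ (n + 1 - 2) = 2 * 2 ^ (n - 2) := by
      rw [show n + 1 - 2 = n - 2 + 1 by omega, pow_succ, mul_comm]
    calc (n + 1).choose 3 = n.choose 2 + n.choose 3 := choose_succ_succ' n 2
      _ ≤ 2 ^ (n + 1 - 2) := by omega

theorem two_pow_mul_choose_le_succ {n k : ℕ} (h : 3 * k + 2 ≤ n) :
    2 ^ (n - k) * n.choose k ≤ 2 ^ (n - (k + 1)) * n.choose (k + 1) := by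
  have hpow : 2 ^ (n - k) = 2 * 2 ^ (n - (k + 1)) := by
    rw [show n - k = n - (k + 1) + 1 by omega, pow_succ, mul_comm]
  refine Nat.le_of_mul_le_mul_right ?_ k.succ_pos
  calc 2 ^ (n - k) * n.choose k * (k + 1)
      = 2 ^ (n - (k + 1)) * n.choose k * (2 * (k + 1)) := by rw [hpow]; ring
    _ ≤ 2 ^ (n - (k + 1)) * n.choose k * (n - k) := Nat.mul_le_mul_left _ (by omega)
    _ = 2 ^ (n - (k + 1)) * n.choose (k + 1) * (k + 1) := by
      rw [mul_assoc, ← choose_succ_right_eq]; ring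

theorem two_pow_mul_choose_mono {n a b : ℕ} (hab : a ≤ b) (hb : 3 * b ≤ n + 1) :
    2 ^ (n - a) * n.choose a ≤ 2 ^ (n - b) * n.choose b := by
  induction b, hab using Nat.le_induction with
  | base => rfl
  | succ k _ ih => exact (ih (by omega)).trans (two_pow_mul_choose_le_succ (by omega))

theorem sixteen_mul_choose_four_le {l : ℕ} (hl : 9 ≤ l) :
    16 * l.choose 4 ≤ 2 ^ (l - 1) * l := by
  obtain ⟨n, rfl⟩ : ∃ n, l = n + 1 := ⟨l - 1, by omega⟩
  have hpow : 2 ^ (n + 1 - 1) = 4 * 2 ^ (n - 2) := by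
    rw [show n + 1 - 1 = n - 2 + 2 by omega, pow_add]; ring
  calc 16 * (n + 1).choose 4 = 4 * ((n + 1).choose 4 * 4) := by ring
    _ = 4 * ((n + 1) * n.choose 3) := by rw [add_one_mul_choose_eq]
    _ ≤ 4 * ((n + 1) * 2 ^ (n - 2)) := by gcongr; exact choose_three_le_two_pow (by omega)
    _ = 2 ^ (n + 1 - 1) * (n + 1) := by rw [hpow]; ring

end Nat

theorem orbit_bound_r (l r : ℕ) (hl : 9 ≤ l) (hr : 2 ≤ r) (hrl : 2 * r ≤ l) :
    2 ^ (l - r + 1) * Nat.choose l (r - 1) ≥ 16 * Nat.choose l 4 := by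
  rw [show l - r + 1 = l - (r - 1) by omega]
  rcases le_or_gt r 4 with hr4 | hr4
  · calc 16 * l.choose 4 ≤ 2 ^ (l - 1) * l.choose 1 := by
          simpa using Nat.sixteen_mul_choose_four_le hl
      _ ≤ 2 ^ (l - (r - 1)) * l.choose (r - 1) :=
          Nat.two_pow_mul_choose_mono (by omega) (by omega)
  · have hpow : 2 ^ 4 ≤ 2 ^ (l - (r - 1)) := Nat.pow_le_pow_right (by norm_num) (by omega)
    exact Nat.mul_le_mul hpow (Nat.choose_le_choose_of_le_of_le_half (by omega) (by omega))
end

section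
/- For all natural numbers l ≥ 7 and all k with 4 ≤ k ≤ (l+1)/2, one has 2^k · (l choose k) ≥ 16 · (l choose 4). -/
/-! The orbit sizes `2 ^ k * l.choose k` increase with `k` as long as `2 * k ≤ l + 1`: passing from
`k` to `k + 1` multiplies `l.choose k` by `(l - k) / (k + 1) ≥ 1 / 2` and the power of two by `2`.
The bound is the case `k = 4` of this monotonicity. -/

theorem Nat.choose_le_two_mul_choose_succ {l k : ℕ} (h : 2 * k + 1 ≤ l) :
    l.choose k ≤ 2 * l.choose (k + 1) := by
  have hrec : l.choose (k + 1) * (k + 1) = l.choose k * (l - k) := Nat.choose_succ_right_eq l k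
  have hratio : k + 1 ≤ 2 * (l - k) := by omega
  refine Nat.le_of_mul_le_mul_right ?_ k.succ_pos
  calc l.choose k * (k + 1) ≤ l.choose k * (2 * (l - k)) := Nat.mul_le_mul_left _ hratio
    _ = 2 * l.choose (k + 1) * (k + 1) := by rw [mul_assoc 2, hrec]; ring

theorem Nat.two_pow_mul_choose_le_of_le {l m n : ℕ} (hmn : m ≤ n) (hn : 2 * n ≤ l + 1) :
    2 ^ m * l.choose m ≤ 2 ^ n * l.choose n := by
  induction n, hmn using Nat.le_induction with
  | base => rfl
  | succ n _ ih =>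
    calc 2 ^ m * l.choose m ≤ 2 ^ n * l.choose n := ih (by omega)
      _ ≤ 2 ^ n * (2 * l.choose (n + 1)) :=
        Nat.mul_le_mul_left _ (Nat.choose_le_two_mul_choose_succ (by omega))
      _ = 2 ^ (n + 1) * l.choose (n + 1) := by ring

theorem orbit_bound_k_general (l k : ℕ) (hk : 4 ≤ k) (hkl : 2 * k ≤ l + 1) :
    2 ^ k * Nat.choose l k ≥ 16 * Nat.choose l 4 :=
  Nat.two_pow_mul_choose_le_of_le hk hkl

theorem orbit_bound_k (l k : ℕ) (hl : 7 ≤ l) (hk : 4 ≤ k) (hkl : 2 * k ≤ l + 1) :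
    2 ^ k * Nat.choose l k ≥ 16 * Nat.choose l 4 :=
  orbit_bound_k_general l k hk hkl
end

section
/- For every natural number l ≥ 9, setting m = ⌊(l+2)/2⌋, one has 2^m · (l choose m) ≥ 16 · (l choose 4). -/
theorem Nat.choose_le_choose_of_le_of_le_half_s6 {n a b : ℕ} (hab : a ≤ b) (hb : b ≤ n / 2) :
    n.choose a ≤ n.choose b := by
  induction b, hab using Nat.le_induction with
  | base => exact le_rfl
  | succ k _ ih => exact (ih (by omega)).trans (Nat.choose_le_succ_of_lt_half_left (by omega))

theorem orbit_bound_mid (l : ℕ) (hl : 9 ≤ l) :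
    2 ^ ((l + 2) / 2) * Nat.choose l ((l + 2) / 2) ≥ 16 * Nat.choose l 4 := by
  have hsymm : l.choose ((l + 2) / 2) = l.choose ((l - 1) / 2) :=
    Nat.choose_symm_of_eq_add (by omega)
  have hchoose : l.choose 4 ≤ l.choose ((l - 1) / 2) :=
    Nat.choose_le_choose_of_le_of_le_half_s6 (by omega) (by omega)
  have hpow : 16 ≤ 2 ^ ((l + 2) / 2) :=
    calc 16 = 2 ^ 4 := by norm_num
      _ ≤ 2 ^ ((l + 2) / 2) := Nat.pow_le_pow_right (by norm_num) (by omega)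
  rw [hsymm]
  exact Nat.mul_le_mul hpow hchoose
end
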